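/- arXiv:2105.03618 — 3 statements merged into one kernel-verified Lean document; each statement's English description precedes it below -/
import Mathlib

section
/- Let α < −1 and define J_y = |y|^α e^{−|y|} for y ∈ ℤ∖{0}. Define G_β(x) = ∑_{n=1}^∞ ∑_{(y₁,…,yₙ)∈(ℤ∖{0})ⁿ, y₁+⋯+yₙ=x} βⁿ ∏ᵢ J_{yᵢ}. Then there exists β₀ > 0 such that for all 0 < β < β₀ there is a constant c_β with G_β(x) ≤ c_β |x|^α e^{−|x|} for all nonzero integers x. -/
open scoped ENNReal

/-- The path sum `G_β(x) = ∑_{n≥1} ∑_{y₁+⋯+yₙ=x, yᵢ≠0} βⁿ ∏ᵢ J_{yᵢ}`,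
encoded as a sum over nonempty lists of nonzero integer steps summing to `x`. -/
noncomputable def pathSum (J : ℤ → ℝ) (β : ℝ) (x : ℤ) : ℝ≥0∞ :=
  ∑' γ : {l : List ℤ // l ≠ [] ∧ (∀ y ∈ l, y ≠ 0) ∧ l.sum = x},
    ENNReal.ofReal (β ^ γ.1.length * (γ.1.map J).prod)

/-!
Write `J` for the step weight, `δ` for the unit mass at `0` and `*` for convolution on `ℤ`.
Grouping paths by their number of steps gives `G_β = ∑_{n ≥ 1} βⁿ J^{*n}`. Since one of `|y|`,
`|x - y|` is at least `|x|/2`, and `e^{-|y|} e^{-|x-y|} ≤ e^{-|x|}`,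
`J y J (x - y) ≤ 2^{-α} (|y|^α + |x - y|^α) J x` for `x ≠ 0`; summing over `y` with
`∑ |y|^α < ∞` gives `J * J ≤ C J` off the origin. For `K = J + δ` this yields `J * K ≤ C K`
everywhere, hence `J^{*n} ≤ Cⁿ K` and `G_β ≤ βC (1 - βC)⁻¹ K`, which is finite once `βC < 1`.
-/

section DiscreteConvolution

variable {G : Type*} [AddCommGroup G]

noncomputable def discreteConv (f g : G → ℝ≥0∞) (x : G) : ℝ≥0∞ := ∑' y, f y * g (x - y)

lemma discreteConv_add_right (f g h : G → ℝ≥0∞) :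
    discreteConv f (g + h) = discreteConv f g + discreteConv f h := by
  ext x
  simp only [discreteConv, Pi.add_apply, mul_add, ENNReal.tsum_add]

lemma discreteConv_single_zero_one [DecidableEq G] (f : G → ℝ≥0∞) :
    discreteConv f (Pi.single 0 1) = f := by
  ext x
  rw [discreteConv, tsum_eq_single x] <;> simp +contextual [sub_eq_zero, eq_comm]

lemma discreteConv_mono_right (f : G → ℝ≥0∞) {g h : G → ℝ≥0∞} (hgh : g ≤ h) :
    discreteConv f g ≤ discreteConv f h := fun _ =>
  ENNReal.tsum_le_tsum fun _ => mul_le_mul_right (hgh _) _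

lemma discreteConv_const_mul (f g : G → ℝ≥0∞) (c : ℝ≥0∞) (x : G) :
    discreteConv f (fun z => c * g z) x = c * discreteConv f g x := by
  simp only [discreteConv, ← ENNReal.tsum_mul_left, mul_left_comm]

variable [DecidableEq G]

noncomputable def convPow (w : G → ℝ≥0∞) : ℕ → G → ℝ≥0∞
  | 0 => Pi.single 0 1
  | n + 1 => discreteConv w (convPow w n)

lemma convPow_apply (w : G → ℝ≥0∞) (n : ℕ) (x : G) :
    convPow w n x = ∑' v : Fin n → G, if ∑ i, v i = x then ∏ i, w (v i) else 0 := by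
  induction n generalizing x with
  | zero => simp [convPow, Pi.single_apply, eq_comm]
  | succ n ih =>
    rw [← (Fin.consEquiv fun _ => G).tsum_eq, ENNReal.tsum_prod']
    simp only [convPow, discreteConv, ih, ← ENNReal.tsum_mul_left]
    refine tsum_congr fun y => tsum_congr fun v => ?_
    simp [Fin.consEquiv, Fin.sum_univ_succ, Fin.prod_univ_succ, eq_sub_iff_add_eq', mul_ite]

lemma convPow_le_pow_mul {w K : G → ℝ≥0∞} {C : ℝ≥0∞} (hK₀ : 1 ≤ K 0)
    (hK : ∀ x, discreteConv w K x ≤ C * K x) (n : ℕ) (x : G) :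
    convPow w n x ≤ C ^ n * K x := by
  induction n generalizing x with
  | zero =>
    rcases eq_or_ne x 0 with rfl | hx
    · simpa [convPow] using hK₀
    · simp [convPow, hx]
  | succ n ih =>
    calc convPow w (n + 1) x ≤ discreteConv w (fun z => C ^ n * K z) x :=
          discreteConv_mono_right w (fun z => ih z) x
      _ = C ^ n * discreteConv w K x := discreteConv_const_mul w K _ x
      _ ≤ C ^ n * (C * K x) := by gcongr; exact hK x
      _ = C ^ (n + 1) * K x := by ring

lemma tsum_pow_mul_convPow_le {w K : G → ℝ≥0∞} {C : ℝ≥0∞} (hK₀ : 1 ≤ K 0)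
    (hK : ∀ x, discreteConv w K x ≤ C * K x) (b : ℝ≥0∞) (x : G) :
    ∑' n : ℕ, b ^ (n + 1) * convPow w (n + 1) x ≤ b * C * (1 - b * C)⁻¹ * K x :=
  calc ∑' n : ℕ, b ^ (n + 1) * convPow w (n + 1) x
      ≤ ∑' n : ℕ, b * C * (b * C) ^ n * K x := ENNReal.tsum_le_tsum fun n => by
        rw [← pow_succ', mul_pow, mul_assoc]
        gcongr
        exact convPow_le_pow_mul hK₀ hK _ x
    _ = b * C * (1 - b * C)⁻¹ * K x := by
        rw [ENNReal.tsum_mul_right, ENNReal.tsum_mul_left, ENNReal.tsum_geometric]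

end DiscreteConvolution

lemma tsum_list_eq_tsum_tsum_ofFn {α : Type*} (f : List α → ℝ≥0∞) :
    ∑' l, f l = ∑' (n : ℕ) (v : Fin n → α), f (List.ofFn v) := by
  rw [← List.equivSigmaTuple.symm.tsum_eq, ENNReal.tsum_sigma']
  rfl

lemma pathSum_eq_tsum_convPow {J : ℤ → ℝ} {β : ℝ} (hJ : ∀ y, 0 ≤ J y) (hJ₀ : J 0 = 0)
    (hβ : 0 ≤ β) (x : ℤ) :
    pathSum J β x =
      ∑' n : ℕ, ENNReal.ofReal β ^ (n + 1) * convPow (ENNReal.ofReal ∘ J) (n + 1) x := by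
  refine (tsum_subtype {l : List ℤ | l ≠ [] ∧ (∀ y ∈ l, y ≠ 0) ∧ l.sum = x}
      fun l => ENNReal.ofReal (β ^ l.length * (l.map J).prod)).trans ?_
  rw [tsum_list_eq_tsum_tsum_ofFn, tsum_eq_zero_add' ENNReal.summable]
  simp only [convPow_apply, ← ENNReal.tsum_mul_left]
  rw [ENNReal.tsum_eq_zero.mpr fun v => by simp, zero_add]
  refine tsum_congr fun n => tsum_congr fun v => ?_
  simp only [Set.indicator_apply, Set.mem_ofPred_eq, ne_eq, List.ofFn_eq_nil_iff,
    Nat.add_one_ne_zero, not_false_eq_true, true_and, List.length_ofFn, List.map_ofFn,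
    List.prod_ofFn, List.sum_ofFn, List.forall_mem_ofFn_iff, Function.comp_apply]
  rw [ENNReal.ofReal_mul (pow_nonneg hβ _), ENNReal.ofReal_pow hβ,
    ENNReal.ofReal_prod_of_nonneg fun i _ => hJ (v i), mul_ite, mul_zero]
  by_cases hv : ∀ i, v i ≠ 0
  · simp [hv]
  · obtain ⟨i, hi⟩ := not_forall_not.mp hv
    have hprod : ∏ i, ENNReal.ofReal (J (v i)) = 0 :=
      Finset.prod_eq_zero (Finset.mem_univ i) (by rw [hi, hJ₀, ENNReal.ofReal_zero])
    simp only [hv, false_and, hprod, mul_zero, ite_self]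

lemma rpow_mul_rpow_le_of_le_add {a b c α : ℝ} (ha : 0 < a) (hb : 0 < b) (hc : 0 < c)
    (habc : c ≤ a + b) (hα : α ≤ 0) :
    a ^ α * b ^ α ≤ 2 ^ (-α) * (a ^ α + b ^ α) * c ^ α := by
  have hhalf : (c / 2) ^ α = 2 ^ (-α) * c ^ α := by
    rw [Real.div_rpow hc.le zero_le_two, Real.rpow_neg zero_le_two, div_eq_inv_mul]
  have hle : ∀ {p q : ℝ}, 0 < p → c / 2 ≤ q →
      p ^ α * q ^ α ≤ 2 ^ (-α) * (p ^ α + q ^ α) * c ^ α := fun {p q} hp hq =>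
    have hq₀ : 0 ≤ q ^ α := Real.rpow_nonneg (by linarith) α
    calc p ^ α * q ^ α ≤ (p ^ α + q ^ α) * (c / 2) ^ α :=
          mul_le_mul (le_add_of_nonneg_right hq₀)
            (Real.rpow_le_rpow_of_nonpos (by positivity) hq hα) hq₀
            (add_nonneg (Real.rpow_nonneg hp.le α) hq₀)
      _ = 2 ^ (-α) * (p ^ α + q ^ α) * c ^ α := by rw [hhalf]; ring
  rcases le_total a b with hab | hab
  · exact hle ha (by linarith)
  · rw [mul_comm, add_comm]
    exact hle hb (by linarith)

noncomputable def stepWeight (α : ℝ) (y : ℤ) : ℝ := |(y : ℝ)| ^ α * Real.exp (-|(y : ℝ)|)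

section StepWeight

variable {α : ℝ}

lemma stepWeight_nonneg (α : ℝ) (y : ℤ) : 0 ≤ stepWeight α y := by
  unfold stepWeight
  positivity

lemma stepWeight_zero (hα : α ≠ 0) : stepWeight α 0 = 0 := by
  simp [stepWeight, Real.zero_rpow hα]

lemma stepWeight_le_rpow (α : ℝ) (y : ℤ) : stepWeight α y ≤ |(y : ℝ)| ^ α :=
  mul_le_of_le_one_right (by positivity) (Real.exp_le_one_iff.mpr (neg_nonpos.mpr (abs_nonneg _)))

lemma abs_intCast_rpow_le_one (hα : α ≤ 0) (y : ℤ) : |(y : ℝ)| ^ α ≤ 1 := by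
  rcases eq_or_ne y 0 with rfl | hy
  · simpa using Real.zero_rpow_le_one α
  · exact Real.rpow_le_one_of_one_le_of_nonpos (by exact_mod_cast Int.one_le_abs hy) hα

lemma stepWeight_mul_stepWeight_sub_le (hα : α < 0) {x : ℤ} (hx : x ≠ 0) (y : ℤ) :
    stepWeight α y * stepWeight α (x - y) ≤
      2 ^ (-α) * (|(y : ℝ)| ^ α + |((x - y : ℤ) : ℝ)| ^ α) * stepWeight α x := by
  rcases eq_or_ne y 0 with rfl | hy
  · rw [stepWeight_zero hα.ne, zero_mul]
    exact mul_nonneg (by positivity) (stepWeight_nonneg α x)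
  rcases eq_or_ne (x - y) 0 with hxy | hxy
  · rw [hxy, stepWeight_zero hα.ne, mul_zero]
    exact mul_nonneg (by positivity) (stepWeight_nonneg α x)
  have htri : |(x : ℝ)| ≤ |(y : ℝ)| + |((x - y : ℤ) : ℝ)| := by
    simpa using abs_add_le (y : ℝ) ((x : ℝ) - y)
  have hpow := rpow_mul_rpow_le_of_le_add (abs_pos.mpr (Int.cast_ne_zero.mpr hy))
    (abs_pos.mpr (Int.cast_ne_zero.mpr hxy)) (abs_pos.mpr (Int.cast_ne_zero.mpr hx)) htri hα.le
  have hexp : Real.exp (-|(y : ℝ)|) * Real.exp (-|((x - y : ℤ) : ℝ)|) ≤ Real.exp (-|(x : ℝ)|) := by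
    rw [← Real.exp_add]
    exact Real.exp_le_exp.mpr (by linarith)
  calc stepWeight α y * stepWeight α (x - y)
      = (|(y : ℝ)| ^ α * |((x - y : ℤ) : ℝ)| ^ α) *
          (Real.exp (-|(y : ℝ)|) * Real.exp (-|((x - y : ℤ) : ℝ)|)) := by
        unfold stepWeight; ring
    _ ≤ (2 ^ (-α) * (|(y : ℝ)| ^ α + |((x - y : ℤ) : ℝ)| ^ α) * |(x : ℝ)| ^ α) *
          Real.exp (-|(x : ℝ)|) := mul_le_mul hpow hexp (by positivity) (by positivity)
    _ = _ := by unfold stepWeight; ring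

lemma tsum_ofReal_abs_intCast_rpow_ne_top (hα : α < -1) :
    ∑' y : ℤ, ENNReal.ofReal (|(y : ℝ)| ^ α) ≠ ∞ := by
  have hs : Summable fun y : ℤ => |(y : ℝ)| ^ α := by
    simpa using Real.summable_abs_int_rpow (b := -α) (by linarith)
  rw [← ENNReal.ofReal_tsum_of_nonneg (fun y => by positivity) hs]
  exact ENNReal.ofReal_ne_top

lemma discreteConv_stepWeight_le_tsum (hα : α ≤ 0) (x : ℤ) :
    discreteConv (ENNReal.ofReal ∘ stepWeight α) (ENNReal.ofReal ∘ stepWeight α) x ≤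
      ∑' y : ℤ, ENNReal.ofReal (|(y : ℝ)| ^ α) :=
  ENNReal.tsum_le_tsum fun y => by
    rw [Function.comp_apply, Function.comp_apply, ← ENNReal.ofReal_mul (stepWeight_nonneg α y)]
    refine ENNReal.ofReal_le_ofReal ?_
    calc stepWeight α y * stepWeight α (x - y) ≤ |(y : ℝ)| ^ α * 1 :=
          mul_le_mul (stepWeight_le_rpow α y)
            ((stepWeight_le_rpow α _).trans (abs_intCast_rpow_le_one hα _))
            (stepWeight_nonneg α _) (by positivity)
      _ = |(y : ℝ)| ^ α := mul_one _

lemma discreteConv_stepWeight_le (hα : α < 0) {x : ℤ} (hx : x ≠ 0) :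
    discreteConv (ENNReal.ofReal ∘ stepWeight α) (ENNReal.ofReal ∘ stepWeight α) x ≤
      ENNReal.ofReal (2 ^ (-α)) * (2 * ∑' y : ℤ, ENNReal.ofReal (|(y : ℝ)| ^ α)) *
        ENNReal.ofReal (stepWeight α x) := by
  have hshift : ∑' y : ℤ, ENNReal.ofReal (|((x - y : ℤ) : ℝ)| ^ α) =
      ∑' y : ℤ, ENNReal.ofReal (|(y : ℝ)| ^ α) :=
    (Equiv.subLeft x).tsum_eq fun z : ℤ => ENNReal.ofReal (|(z : ℝ)| ^ α)
  calc discreteConv (ENNReal.ofReal ∘ stepWeight α) (ENNReal.ofReal ∘ stepWeight α) x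
      ≤ ∑' y : ℤ, ENNReal.ofReal (2 ^ (-α)) *
          (ENNReal.ofReal (|(y : ℝ)| ^ α) + ENNReal.ofReal (|((x - y : ℤ) : ℝ)| ^ α)) *
          ENNReal.ofReal (stepWeight α x) := ENNReal.tsum_le_tsum fun y => by
        rw [Function.comp_apply, Function.comp_apply, ← ENNReal.ofReal_mul (stepWeight_nonneg α y),
          ← ENNReal.ofReal_add (by positivity) (by positivity),
          ← ENNReal.ofReal_mul (by positivity), ← ENNReal.ofReal_mul (by positivity)]
        exact ENNReal.ofReal_le_ofReal (stepWeight_mul_stepWeight_sub_le hα hx y)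
    _ = _ := by
        rw [ENNReal.tsum_mul_right, ENNReal.tsum_mul_left, ENNReal.tsum_add, hshift, two_mul]

lemma exists_discreteConv_stepWeight_add_single_le (hα : α < -1) :
    ∃ C ≠ ∞, ∀ x : ℤ,
      discreteConv (ENNReal.ofReal ∘ stepWeight α) (ENNReal.ofReal ∘ stepWeight α + Pi.single 0 1) x
        ≤ C * (ENNReal.ofReal ∘ stepWeight α + Pi.single 0 1 : ℤ → ℝ≥0∞) x := by
  set S := ∑' y : ℤ, ENNReal.ofReal (|(y : ℝ)| ^ α)
  have hS : S ≠ ∞ := tsum_ofReal_abs_intCast_rpow_ne_top hα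
  refine ⟨ENNReal.ofReal (2 ^ (-α)) * (2 * S) + 1 + S, by finiteness, fun x => ?_⟩
  rw [discreteConv_add_right, discreteConv_single_zero_one]
  simp only [Pi.add_apply, Function.comp_apply]
  rcases eq_or_ne x 0 with rfl | hx
  · rw [stepWeight_zero (by linarith), ENNReal.ofReal_zero, add_zero, zero_add,
      Pi.single_eq_same, mul_one]
    exact (discreteConv_stepWeight_le_tsum (by linarith) 0).trans le_add_self
  · rw [Pi.single_eq_of_ne hx, add_zero]
    calc discreteConv (ENNReal.ofReal ∘ stepWeight α) (ENNReal.ofReal ∘ stepWeight α) x +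
          ENNReal.ofReal (stepWeight α x)
        ≤ (ENNReal.ofReal (2 ^ (-α)) * (2 * S) + 1) * ENNReal.ofReal (stepWeight α x) := by
          rw [add_mul, one_mul]
          gcongr
          exact discreteConv_stepWeight_le (by linarith) hx
      _ ≤ _ := mul_le_mul_left le_self_add _

end StepWeight

theorem stmt4 (α : ℝ) (hα : α < -1) :
    ∃ β₀ > (0 : ℝ), ∀ β : ℝ, 0 < β → β < β₀ →
      ∃ c > (0 : ℝ), ∀ x : ℤ, x ≠ 0 →
        pathSum (fun y => |(y : ℝ)| ^ α * Real.exp (-|(y : ℝ)|)) β x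
          ≤ ENNReal.ofReal (c * |(x : ℝ)| ^ α * Real.exp (-|(x : ℝ)|)) := by
  obtain ⟨C, hC, hconv⟩ := exists_discreteConv_stepWeight_add_single_le hα
  refine ⟨(C.toReal + 1)⁻¹, by positivity, fun β hβ hββ₀ => ?_⟩
  have hβC : ENNReal.ofReal β * C < 1 := by
    rw [← ENNReal.ofReal_toReal hC, ← ENNReal.ofReal_mul hβ.le, ENNReal.ofReal_lt_one]
    rw [← one_div, lt_div_iff₀ (by positivity)] at hββ₀
    nlinarith
  set T := ENNReal.ofReal β * C * (1 - ENNReal.ofReal β * C)⁻¹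
  have hT : T ≠ ∞ :=
    ENNReal.mul_ne_top (by finiteness) (ENNReal.inv_ne_top.mpr (tsub_pos_of_lt hβC).ne')
  refine ⟨T.toReal + 1, by positivity, fun x hx => ?_⟩
  calc pathSum (stepWeight α) β x
      = ∑' n : ℕ,
          ENNReal.ofReal β ^ (n + 1) * convPow (ENNReal.ofReal ∘ stepWeight α) (n + 1) x :=
        pathSum_eq_tsum_convPow (stepWeight_nonneg α) (stepWeight_zero (by linarith)) hβ.le x
    _ ≤ T * (ENNReal.ofReal ∘ stepWeight α + Pi.single 0 1 : ℤ → ℝ≥0∞) x :=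
        tsum_pow_mul_convPow_le (by simp) hconv _ x
    _ = ENNReal.ofReal T.toReal * ENNReal.ofReal (stepWeight α x) := by
        simp [hx, ENNReal.ofReal_toReal hT]
    _ ≤ ENNReal.ofReal ((T.toReal + 1) * stepWeight α x) := by
        rw [← ENNReal.ofReal_mul ENNReal.toReal_nonneg]
        exact ENNReal.ofReal_le_ofReal
          (mul_le_mul_of_nonneg_right (le_add_of_nonneg_right zero_le_one) (stepWeight_nonneg α x))
    _ = _ := by rw [stepWeight, mul_assoc]
end

section
/- Let ψ : ℤ_{>0} → ℝ_{>0} be sub-exponential, i.e. lim_{y→∞} ln ψ(y)/y = 0, and suppose ∑_{y≥1} ψ(y) = ∞. Define J_y = ψ(|y|)e^{−|y|} and G_β(x) = ∑_{n≥1} ∑_{y₁+⋯+yₙ=x, yᵢ≠0} βⁿ ∏ᵢ J_{yᵢ} for β > 0 (allowing the value +∞). Then for every β > 0 there exist R ∈ ℤ_{>0} and c > 0 such that for all positive integers x divisible by R, G_β(x) ≥ c^{x/R} e^{−x + x/R}. Consequently, limsup_{x→∞} (1/x) ln G_β(x) ≥ −1 + 1/R > −1. -/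
/-!
Since `∑ ψ` diverges we may choose `R` with `β ∑_{j ≤ R} ψ j ≥ e`. The constant path `(R, …, R)`
alone gives the first bound. For the second, the paths with `N` steps in `[1, R]` carry total
weight `e^{-s} βᴺ (∑_{j ≤ R} ψ j)ᴺ ≥ e^{N-s}` between them, spread over at most `NR` endpoints
`s ∈ [N, NR]`; by pigeonhole some `s` gets `G_β(s) ≥ e^{N-s} / (NR)`, and `N ≥ s / R` while
`log (NR) = o(N)`.
-/

open scoped ENNReal
open Filter

open Finset Real

noncomputable def expWeight (ψ : ℕ → ℝ) (y : ℤ) : ℝ := ψ y.natAbs * exp (-|(y : ℝ)|)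

lemma expWeight_natCast (ψ : ℕ → ℝ) (n : ℕ) : expWeight ψ n = ψ n * exp (-(n : ℝ)) := by
  simp [expWeight]

lemma sum_le_pathSum (J : ℤ → ℝ) (β : ℝ) (x : ℤ) (L : Finset (List ℤ))
    (hL : ∀ l ∈ L, l ≠ [] ∧ (∀ y ∈ l, y ≠ 0) ∧ l.sum = x) :
    ∑ l ∈ L, ENNReal.ofReal (β ^ l.length * (l.map J).prod) ≤ pathSum J β x := by
  classical
  rw [← sum_subtype_of_mem _ hL]
  exact ENNReal.sum_le_tsum _

/-- A composition `f` of `s` into `N` positive parts is the path `f 0, …, f (N-1)`. -/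
lemma sum_le_pathSum_of_compositions (ψ : ℕ → ℝ) (β : ℝ) {N s : ℕ} (hN : 0 < N)
    (A : Finset (Fin N → ℕ)) (hA : ∀ f ∈ A, (∀ i, 0 < f i) ∧ ∑ i, f i = s) :
    ∑ f ∈ A, ENNReal.ofReal (β ^ N * (∏ i, ψ (f i)) * exp (-(s : ℝ)))
      ≤ pathSum (expWeight ψ) β s := by
  classical
  set toPath : (Fin N → ℕ) → List ℤ := fun f => List.ofFn fun i => (f i : ℤ)
  have h_inj : Function.Injective toPath := fun f g hfg =>
    funext fun i => by exact_mod_cast congrFun (List.ofFn_injective hfg) i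
  have h_weight : ∀ f ∈ A, β ^ N * (∏ i, ψ (f i)) * exp (-(s : ℝ))
      = β ^ (toPath f).length * ((toPath f).map (expWeight ψ)).prod := by
    intro f hf
    simp only [toPath, List.length_ofFn, List.map_ofFn, List.prod_ofFn, Function.comp_def,
      expWeight_natCast, prod_mul_distrib, ← exp_sum, ← (hA f hf).2, Nat.cast_sum, sum_neg_distrib]
    ring
  rw [sum_congr rfl fun f hf => congrArg ENNReal.ofReal (h_weight f hf),
    ← sum_image (f := fun l : List ℤ => ENNReal.ofReal (β ^ l.length * (l.map (expWeight ψ)).prod))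
      fun f _ g _ hfg => h_inj hfg]
  refine sum_le_pathSum _ _ _ _ fun l hl => ?_
  obtain ⟨f, hf, rfl⟩ := mem_image.1 hl
  refine ⟨by simpa [toPath] using hN.ne', fun y hy => ?_, ?_⟩
  · obtain ⟨i, rfl⟩ := List.mem_ofFn.1 hy
    exact_mod_cast (hA f hf).1 i |>.ne'
  · simp [toPath, List.sum_ofFn, ← (hA f hf).2]

lemma pow_mul_exp_le_pathSum (ψ : ℕ → ℝ) (β : ℝ) {N R : ℕ} (hN : 0 < N) (hR : 0 < R) :
    ENNReal.ofReal ((β * ψ R / exp 1) ^ N * exp (-((N * R : ℕ) : ℝ) + N))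
      ≤ pathSum (expWeight ψ) β (N * R : ℕ) := by
  have h := sum_le_pathSum_of_compositions ψ β (s := N * R) hN {fun _ => R} (by simp [hR])
  rw [sum_singleton] at h
  convert h using 2
  simp only [prod_const, card_univ, Fintype.card_fin, div_pow, ← exp_one_pow, exp_add]
  field_simp
  ring

lemma exists_le_pathSum (ψ : ℕ → ℝ) (hψ : ∀ j, 0 < j → 0 ≤ ψ j) {β : ℝ} (hβ : 0 ≤ β)
    {N R : ℕ} (hN : 0 < N) (hR : 0 < R) :
    ∃ s, N ≤ s ∧ s ≤ N * R ∧
      ENNReal.ofReal ((β * ∑ j ∈ Icc 1 R, ψ j) ^ N / (N * R) * exp (-(s : ℝ)))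
        ≤ pathSum (expWeight ψ) β s := by
  classical
  set A := Fintype.piFinset fun _ : Fin N => Icc 1 R
  have h_total : ∑ f ∈ A, ∏ i, ψ (f i) = (∑ j ∈ Icc 1 R, ψ j) ^ N := by
    rw [← prod_univ_sum, prod_const, card_univ, Fintype.card_fin]
  have h_maps : ∀ f ∈ A, ∑ i, f i ∈ Icc N (N * R) := by
    intro f hf
    have hf' : ∀ i, 1 ≤ f i ∧ f i ≤ R := fun i => mem_Icc.1 (Fintype.mem_piFinset.1 hf i)
    rw [mem_Icc]
    constructor
    · simpa using sum_le_sum fun i (_ : i ∈ univ) => (hf' i).1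
    · simpa [mul_comm] using sum_le_sum fun i (_ : i ∈ univ) => (hf' i).2
  have h_NR : (0 : ℝ) < N * R := by positivity
  obtain ⟨s, hs, h_fiber⟩ := exists_le_sum_fiber_of_maps_to_of_nsmul_le_sum h_maps
    (nonempty_Icc.2 (Nat.le_mul_of_pos_right N hR))
    (b := (∑ j ∈ Icc 1 R, ψ j) ^ N / (N * R)) (w := fun f => ∏ i, ψ (f i)) (by
      rw [h_total, nsmul_eq_mul, Nat.card_Icc]
      have h_card : ((N * R + 1 - N : ℕ) : ℝ) ≤ N * R := by
        exact_mod_cast (by omega : N * R + 1 - N ≤ N * R)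
      have h_nonneg : 0 ≤ (∑ j ∈ Icc 1 R, ψ j) ^ N :=
        pow_nonneg (sum_nonneg fun j hj => hψ j (mem_Icc.1 hj).1) _
      calc _ ≤ (N * R : ℝ) * ((∑ j ∈ Icc 1 R, ψ j) ^ N / (N * R)) := by gcongr
        _ = _ := mul_div_cancel₀ _ h_NR.ne')
  refine ⟨s, (mem_Icc.1 hs).1, (mem_Icc.1 hs).2, ?_⟩
  have h_parts : ∀ f ∈ A.filter (fun f => ∑ i, f i = s), (∀ i, 0 < f i) ∧ ∑ i, f i = s :=
    fun f hf => ⟨fun i => (mem_Icc.1 (Fintype.mem_piFinset.1 (mem_filter.1 hf).1 i)).1,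
      (mem_filter.1 hf).2⟩
  refine le_trans ?_ (sum_le_pathSum_of_compositions ψ β hN _ h_parts)
  rw [← ENNReal.ofReal_sum_of_nonneg fun f hf => ?_, ← sum_mul, ← mul_sum, mul_pow,
    mul_div_assoc]
  · gcongr
  · exact mul_nonneg (mul_nonneg (pow_nonneg hβ _)
      (prod_nonneg fun i _ => hψ _ ((h_parts f hf).1 i))) (exp_pos _).le

lemma eventually_mul_le_exp_mul (a : ℝ) {t : ℝ} (ht : 0 < t) :
    ∀ᶠ x : ℝ in atTop, a * x ≤ exp (t * x) := by
  filter_upwards [eventually_ge_atTop (2 * a / t ^ 2), eventually_ge_atTop 0] with x hx hx0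
  have h_exp := quadratic_le_exp_of_nonneg (mul_nonneg ht.le hx0)
  rw [div_le_iff₀ (by positivity)] at hx
  nlinarith

lemma frequently_exp_mul_le_pathSum (ψ : ℕ → ℝ) (hψ : ∀ j, 0 < j → 0 ≤ ψ j) {β : ℝ}
    (hβ : 0 ≤ β) {R : ℕ} (hR : 0 < R) (h_mass : exp 1 ≤ β * ∑ j ∈ Icc 1 R, ψ j) {m : ℝ}
    (hm : m < -1 + 1 / R) :
    ∃ᶠ x : ℕ in atTop, ENNReal.ofReal (exp (m * x)) ≤ pathSum (expWeight ψ) β x := by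
  set u := max (m + 1) 0
  have h_uR : u * R < 1 := by
    rw [← lt_div_iff₀ (by positivity)]
    exact max_lt (by linarith) (by positivity)
  have h_large : ∀ᶠ N : ℕ in atTop, (R : ℝ) * N ≤ exp ((1 - u * R) * N) :=
    tendsto_natCast_atTop_atTop.eventually (eventually_mul_le_exp_mul R (by linarith))
  rw [frequently_atTop]
  intro M
  obtain ⟨N, hN, hN_ge⟩ := (h_large.and (eventually_ge_atTop (max M 1))).exists
  have hN_pos : 0 < N := by omega
  obtain ⟨s, hNs, hsNR, h_le⟩ := exists_le_pathSum ψ hψ hβ hN_pos hR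
  refine ⟨s, by omega, le_trans (ENNReal.ofReal_le_ofReal ?_) h_le⟩
  have h_NR : (0 : ℝ) < N * R := by positivity
  have h_s : (m + 1) * s ≤ u * (N * R) :=
    (mul_le_mul_of_nonneg_right (le_max_left _ _) (Nat.cast_nonneg s)).trans
      (mul_le_mul_of_nonneg_left (by exact_mod_cast hsNR) (le_max_right _ _))
  have h_pow : exp N ≤ (β * ∑ j ∈ Icc 1 R, ψ j) ^ N := by
    rw [← exp_one_pow]
    exact pow_le_pow_left₀ (exp_pos 1).le h_mass N
  calc exp (m * s) = exp ((m + 1) * s) * exp (-s) := by rw [← exp_add]; ring_nf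
    _ ≤ exp N / (N * R) * exp (-s) := by
      gcongr
      rw [le_div_iff₀ h_NR]
      calc exp ((m + 1) * s) * (N * R) ≤ exp (u * (N * R)) * exp ((1 - u * R) * N) := by
            gcongr
            linarith
        _ = exp N := by rw [← exp_add]; ring_nf
    _ ≤ _ := by gcongr

lemma exists_le_sum_Icc_of_not_summable (ψ : ℕ → ℝ) (hψ : ∀ j, 0 < j → 0 ≤ ψ j)
    (h_div : ¬ Summable (fun y : ℕ => ψ (y + 1))) (C : ℝ) :
    ∃ R, 0 < R ∧ C ≤ ∑ j ∈ Icc 1 R, ψ j := by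
  have h_tendsto := (not_summable_iff_tendsto_nat_atTop_of_nonneg fun n => hψ _ n.succ_pos).1 h_div
  obtain ⟨R, hC, hR⟩ := ((h_tendsto.eventually_ge_atTop C).and (eventually_gt_atTop 0)).exists
  refine ⟨R, hR, ?_⟩
  rwa [range_eq_Ico, sum_Ico_add' ψ 0 R 1, zero_add, Ico_add_one_right_eq_Icc] at hC

theorem stmt10_general (ψ : ℕ → ℝ) (hpos : ∀ y : ℕ, 0 < y → 0 < ψ y)
    (hdiv : ¬ Summable (fun y : ℕ => ψ (y + 1))) :
    ∀ β : ℝ, 0 < β → ∃ R : ℕ, 0 < R ∧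
      (∃ c > (0 : ℝ), ∀ x : ℕ, 0 < x → R ∣ x →
        ENNReal.ofReal (c ^ (x / R) * Real.exp (-(x : ℝ) + (x : ℝ) / (R : ℝ)))
          ≤ pathSum (fun y => ψ y.natAbs * Real.exp (-|(y : ℝ)|)) β (x : ℤ)) ∧
      (-1 : ℝ) < -1 + 1 / (R : ℝ) ∧
      -- `limsup_{x→∞} (1/x) ln G_β(x) ≥ -1 + 1/R`, stated safely in `ℝ≥0∞`:
      ∀ m : ℝ, m < -1 + 1 / (R : ℝ) → ∃ᶠ x : ℕ in atTop,
        ENNReal.ofReal (Real.exp (m * x))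
          ≤ pathSum (fun y => ψ y.natAbs * Real.exp (-|(y : ℝ)|)) β (x : ℤ) := by
  intro β hβ
  have hψ : ∀ j, 0 < j → 0 ≤ ψ j := fun j hj => (hpos j hj).le
  obtain ⟨R, hR, h_sum⟩ := exists_le_sum_Icc_of_not_summable ψ hψ hdiv (exp 1 / β)
  have h_mass : exp 1 ≤ β * ∑ j ∈ Icc 1 R, ψ j := by rwa [div_le_iff₀' hβ] at h_sum
  refine ⟨R, hR, ⟨β * ψ R / exp 1, by have := hpos R hR; positivity, fun x hx hRx => ?_⟩,
    by simp [hR], fun m hm => frequently_exp_mul_le_pathSum ψ hψ hβ.le hR h_mass hm⟩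
  obtain ⟨N, rfl⟩ := hRx
  have hN : 0 < N := Nat.pos_of_mul_pos_left hx
  rw [mul_comm R N, Nat.mul_div_cancel _ hR, Nat.cast_mul,
    mul_div_cancel_right₀ _ (Nat.cast_ne_zero.2 hR.ne'), ← Nat.cast_mul]
  exact pow_mul_exp_le_pathSum ψ β hN hR

theorem stmt10 (ψ : ℕ → ℝ) (hpos : ∀ y : ℕ, 0 < y → 0 < ψ y)
    (hsub : Tendsto (fun y : ℕ => Real.log (ψ y) / y) atTop (nhds 0))
    (hdiv : ¬ Summable (fun y : ℕ => ψ (y + 1))) :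
    ∀ β : ℝ, 0 < β → ∃ R : ℕ, 0 < R ∧
      (∃ c > (0 : ℝ), ∀ x : ℕ, 0 < x → R ∣ x →
        ENNReal.ofReal (c ^ (x / R) * Real.exp (-(x : ℝ) + (x : ℝ) / (R : ℝ)))
          ≤ pathSum (fun y => ψ y.natAbs * Real.exp (-|(y : ℝ)|)) β (x : ℤ)) ∧
      (-1 : ℝ) < -1 + 1 / (R : ℝ) ∧
      -- `limsup_{x→∞} (1/x) ln G_β(x) ≥ -1 + 1/R`, stated safely in `ℝ≥0∞`:
      ∀ m : ℝ, m < -1 + 1 / (R : ℝ) → ∃ᶠ x : ℕ in atTop,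
        ENNReal.ofReal (Real.exp (m * x))
          ≤ pathSum (fun y => ψ y.natAbs * Real.exp (-|(y : ℝ)|)) β (x : ℤ) :=
  stmt10_general ψ hpos hdiv
end

section
/- For p ∈ (2, ∞) and the curve {(x,y) ∈ ℝ² : x^p + y^p = 1, x,y > 0} parametrized near a point (x₀, y₀) with x₀, y₀ > 0, the function f in the local parametrization u = s₀ + τv − f(τv)t̂ satisfies f(τv) = ((p−1)/2) · x₀^{p−2} y₀^{p−2} / (x₀^{2p−2} + y₀^{2p−2})^{3/2} · τ² + o(τ²) as τ → 0. -/
open Asymptotics Filter Topology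

/-!
Near `s₀` the arc is the graph of `φ x = (1 - x ^ p) ^ (1 / p)`. Measured in the frame `(v, t̂)`,
the point `(x, φ x)` has a tangential coordinate `T x` and a normal coordinate `F x`. Since
`T' x₀ ≠ 0`, the one-dimensional inverse function theorem gives `x = X τ` with `T (X τ) = τ`, and
`f = F ∘ X`. As `F x₀ = F' x₀ = 0`, Taylor's formula gives `F x = F'' x₀ / 2 * (x - x₀) ^ 2 + o`,
and substituting `X τ - x₀ ~ τ / T' x₀` yields `f τ = F'' x₀ / (2 T' x₀ ^ 2) * τ ^ 2 + o(τ ^ 2)`.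
For a graph with unit normal `(a, b) / N` this constant is `-b ^ 3 φ'' x₀ / (2 N ^ 3)`, which for
the `p`-sphere is the stated one.
-/

theorem isLittleO_sub_taylor_two {f f' : ℝ → ℝ} {a B : ℝ}
    (hf : ∀ᶠ x in 𝓝 a, HasDerivAt f (f' x) x) (hf' : HasDerivAt f' B a) :
    (fun x => f x - f a - f' a * (x - a) - B / 2 * (x - a) ^ 2) =o[𝓝 a]
      fun x => (x - a) ^ 2 := by
  obtain ⟨δ, hδ, hball⟩ := Metric.eventually_nhds_iff_ball.1 hf
  have hderiv : ∀ x ∈ Metric.ball a δ, HasDerivWithinAt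
      (fun x => f x - f a - f' a * (x - a) - B / 2 * (x - a) ^ 2)
      (f' x - f' a - B * (x - a) ^ 1) (Metric.ball a δ) x := by
    intro x hx
    refine HasDerivAt.hasDerivWithinAt <| HasDerivAt.congr_deriv
      ((((hball x hx).sub_const (f a)).sub (((hasDerivAt_id x).sub_const a).const_mul (f' a))).sub
        ((((hasDerivAt_id x).sub_const a).pow 2).const_mul (B / 2))) ?_
    simp only [id_eq]
    ring
  have hsmall : (fun x => f' x - f' a - B * (x - a) ^ 1) =o[𝓝[Metric.ball a δ] a]
      fun x => (x - a) ^ 1 := by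
    rw [nhdsWithin_eq_nhds.2 (Metric.ball_mem_nhds a hδ)]
    simpa [mul_comm] using hf'.isLittleO
  simpa [nhdsWithin_eq_nhds.2 (Metric.ball_mem_nhds a hδ)] using
    (convex_ball a δ).isLittleO_pow_succ_real (Metric.mem_ball_self hδ) hderiv hsmall

theorem isLittleO_sq_comp_of_hasDerivAt {g h : ℝ → ℝ} {a b h' A : ℝ}
    (hg : (fun x => g x - A * (x - a) ^ 2) =o[𝓝 a] fun x => (x - a) ^ 2)
    (hh : HasDerivAt h h' b) (hb : h b = a) :
    (fun t => g (h t) - A * h' ^ 2 * (t - b) ^ 2) =o[𝓝 b] fun t => (t - b) ^ 2 := by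
  have hlin : (fun t => h t - a - h' * (t - b)) =o[𝓝 b] fun t => t - b := by
    simpa [hb, mul_comm] using hh.isLittleO
  have hbig : (fun t => h t - a) =O[𝓝 b] fun t => t - b := by
    simpa [hb] using hh.hasFDerivAt.isBigO_sub
  have hsq : (fun t => (h t - a) ^ 2) =O[𝓝 b] fun t => (t - b) ^ 2 := hbig.pow 2
  have hcomp := (hg.comp_tendsto (hb ▸ hh.continuousAt.tendsto)).trans_isBigO hsq
  have hdiff : (fun t => A * ((h t - a) ^ 2 - (h' * (t - b)) ^ 2)) =o[𝓝 b]
      fun t => (t - b) ^ 2 := by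
    have hsum : (fun t => h t - a + h' * (t - b)) =O[𝓝 b] fun t => t - b :=
      hbig.add ((isBigO_refl _ _).const_mul_left h')
    refine ((hlin.mul_isBigO hsum).const_mul_left A).congr'
      (Eventually.of_forall fun t => ?_) (Eventually.of_forall fun t => ?_) <;>
    ring
  refine (hcomp.add hdiff).congr' (Eventually.of_forall fun t => ?_) EventuallyEq.rfl
  simp only [Function.comp]
  ring

theorem exists_graph_normal_expansion {φ φ' : ℝ → ℝ} {x₀ a b N B : ℝ}
    (hφ : ∀ᶠ x in 𝓝 x₀, HasDerivAt φ (φ' x) x) (hφ' : HasDerivAt φ' B x₀)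
    (hab : a + φ' x₀ * b = 0) (hb : b ≠ 0) (hN : N ^ 2 = a ^ 2 + b ^ 2) :
    ∃ f X : ℝ → ℝ, f 0 = 0 ∧ Tendsto X (𝓝 0) (𝓝 x₀) ∧
      (∀ᶠ τ in 𝓝 0, x₀ + τ * (-b / N) - f τ * (a / N) = X τ ∧
        φ x₀ + τ * (a / N) - f τ * (b / N) = φ (X τ)) ∧
      (fun τ => f τ - -(b ^ 3 * B) / (2 * N ^ 3) * τ ^ 2) =o[𝓝 0] fun τ => τ ^ 2 := by
  have hN0 : N ≠ 0 := by
    rintro rfl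
    exact hb (pow_eq_zero_iff two_ne_zero |>.1 (by nlinarith [sq_nonneg a, sq_nonneg b]))
  -- coordinates of `(x, φ x) - (x₀, φ x₀)` along `(-b, a) / N` and along `-(a, b) / N`
  set T : ℝ → ℝ := fun x => ((x₀ - x) * b + (φ x - φ x₀) * a) / N
  set F : ℝ → ℝ := fun x => -((x - x₀) * a + (φ x - φ x₀) * b) / N
  have hT : HasStrictDerivAt T (-N / b) x₀ := by
    have hφs := hasStrictDerivAt_of_hasDerivAt_of_continuousAt hφ hφ'.continuousAt
    refine ((((hasStrictDerivAt_id x₀).const_sub x₀).mul_const b).add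
      ((hφs.sub (hasStrictDerivAt_const x₀ (φ x₀))).mul_const a)).div_const N |>.congr_deriv ?_
    have ha : a = -(φ' x₀ * b) := by linarith
    field_simp
    rw [ha] at hN ⊢
    linear_combination hN
  have hF : ∀ᶠ x in 𝓝 x₀, HasDerivAt F (-(a + φ' x * b) / N) x := by
    filter_upwards [hφ] with x hx
    refine (((((hasDerivAt_id x).sub_const x₀).mul_const a).add
      ((hx.sub_const (φ x₀)).mul_const b)).neg.div_const N).congr_deriv ?_
    simp
  have hF' : HasDerivAt (fun x => -(a + φ' x * b) / N) (-(B * b) / N) x₀ :=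
    ((hφ'.mul_const b).const_add a).neg.div_const N
  have hTaylor : (fun x => F x - -(B * b) / (2 * N) * (x - x₀) ^ 2) =o[𝓝 x₀]
      fun x => (x - x₀) ^ 2 := by
    refine (isLittleO_sub_taylor_two hF hF').congr' (Eventually.of_forall fun x => ?_)
      EventuallyEq.rfl
    simp only [F, hab, sub_self]
    ring
  have hBT : -N / b ≠ 0 := div_ne_zero (neg_ne_zero.2 hN0) hb
  set X := hT.localInverse T (-N / b) x₀ hBT
  have hT0 : T x₀ = 0 := by simp [T]
  have hX0 : X 0 = x₀ := hT0 ▸ (hT.eventually_left_inverse hBT).self_of_nhds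
  have hX : HasStrictDerivAt X (-N / b)⁻¹ 0 := hT0 ▸ hT.to_localInverse hBT
  have hTX : ∀ᶠ τ in 𝓝 0, T (X τ) = τ := hT0 ▸ hT.eventually_right_inverse hBT
  have hXlim : Tendsto X (𝓝 0) (𝓝 x₀) := hX0 ▸ hX.hasDerivAt.continuousAt.tendsto
  refine ⟨fun τ => F (X τ), X, by simp [F, hX0], hXlim, ?_, ?_⟩
  · filter_upwards [hTX] with τ hτ
    generalize X τ = x at hτ ⊢
    subst hτ
    simp only [T, F]
    constructor <;> field_simp
    · linear_combination (x₀ - x) * hN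
    · linear_combination (φ x₀ - φ x) * hN
  · refine (isLittleO_sq_comp_of_hasDerivAt hTaylor hX.hasDerivAt hX0).congr'
      (Eventually.of_forall fun τ => ?_) (Eventually.of_forall fun τ => ?_)
    · field_simp
      ring
    · simp only [sub_zero]

theorem hasDerivAt_one_sub_rpow_rpow_inv {p x : ℝ} (hx : x ≠ 0) (hu : 1 - x ^ p ≠ 0) :
    HasDerivAt (fun x => (1 - x ^ p) ^ p⁻¹) (-(x ^ (p - 1) * (1 - x ^ p) ^ (p⁻¹ - 1))) x := by
  have hp : p ≠ 0 := by rintro rfl; simp at hu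
  refine (((Real.hasDerivAt_rpow_const (Or.inl hx)).const_sub 1).rpow_const
    (Or.inl hu)).congr_deriv ?_
  field_simp

theorem hasDerivAt_neg_rpow_sub_one_mul_one_sub_rpow {p x : ℝ} (hx : 0 < x)
    (hu : 0 < 1 - x ^ p) :
    HasDerivAt (fun x => -(x ^ (p - 1) * (1 - x ^ p) ^ (p⁻¹ - 1)))
      (-((p - 1) * x ^ (p - 2) * (1 - x ^ p) ^ (p⁻¹ - 2))) x := by
  have hp : p ≠ 0 := by rintro rfl; simp at hu
  have hxp : x ^ p = x ^ (p - 2) * x ^ 2 := by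
    rw [← Real.rpow_natCast, ← Real.rpow_add hx]; norm_num
  have hxp1 : x ^ (p - 1) = x ^ (p - 2) * x := by
    rw [← Real.rpow_add_one hx.ne']; ring_nf
  have hup : (1 - x ^ p) ^ (p⁻¹ - 1) = (1 - x ^ p) ^ (p⁻¹ - 2) * (1 - x ^ p) := by
    rw [← Real.rpow_add_one hu.ne']; ring_nf
  refine (((Real.hasDerivAt_rpow_const (Or.inl hx.ne')).mul
    (((Real.hasDerivAt_rpow_const (Or.inl hx.ne')).const_sub 1).rpow_const
      (Or.inl hu.ne'))).neg).congr_deriv ?_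
  rw [show p - 1 - 1 = p - 2 by ring, show p⁻¹ - 1 - 1 = p⁻¹ - 2 by ring, hup, hxp1]
  field_simp
  linear_combination (p - 1) * hxp

theorem eventually_pos_and_one_sub_rpow_pos {p x₀ : ℝ} (hx : 0 < x₀) (h : x₀ ^ p < 1) :
    ∀ᶠ x in 𝓝 x₀, 0 < x ∧ 0 < 1 - x ^ p := by
  have hu : ContinuousAt (fun x => 1 - x ^ p) x₀ :=
    (Real.continuousAt_rpow_const x₀ p (Or.inl hx.ne')).const_sub 1
  exact (eventually_gt_nhds hx).and <| hu.tendsto.eventually (eventually_gt_nhds (by linarith))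

theorem one_sub_rpow_rpow_inv_sub {p x y : ℝ} (hp : p ≠ 0) (hy : 0 ≤ y)
    (h : x ^ p + y ^ p = 1) (c : ℝ) : (1 - x ^ p) ^ (p⁻¹ - c) = y ^ (1 - c * p) := by
  rw [show 1 - x ^ p = y ^ p by linarith, ← Real.rpow_mul hy]
  field_simp

theorem rpow_sub_one_sq {z : ℝ} (hz : 0 ≤ z) (p : ℝ) : (z ^ (p - 1)) ^ 2 = z ^ (2 * p - 2) := by
  rw [← Real.rpow_mul_natCast hz]
  ring_nf

theorem abs_rpow_add_abs_one_sub_rpow_rpow_inv {p x : ℝ} (hp : p ≠ 0) (hx : 0 ≤ x)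
    (hu : 0 ≤ 1 - x ^ p) : |x| ^ p + |(1 - x ^ p) ^ p⁻¹| ^ p = 1 := by
  rw [abs_of_nonneg hx, abs_of_nonneg (Real.rpow_nonneg hu _), Real.rpow_inv_rpow hu hp]
  ring

theorem stmt13 (p x₀ y₀ : ℝ) (hp : 2 < p) (hx : 0 < x₀) (hy : 0 < y₀)
    (hs : x₀ ^ p + y₀ ^ p = 1) :
    ∃ f : ℝ → ℝ, f 0 = 0 ∧
      (∀ᶠ τ : ℝ in nhds 0,
        |x₀ + τ * (-(y₀ ^ (p - 1)) / Real.sqrt (x₀ ^ (2 * p - 2) + y₀ ^ (2 * p - 2)))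
            - f τ * (x₀ ^ (p - 1) / Real.sqrt (x₀ ^ (2 * p - 2) + y₀ ^ (2 * p - 2)))| ^ p
          + |y₀ + τ * (x₀ ^ (p - 1) / Real.sqrt (x₀ ^ (2 * p - 2) + y₀ ^ (2 * p - 2)))
            - f τ * (y₀ ^ (p - 1) / Real.sqrt (x₀ ^ (2 * p - 2) + y₀ ^ (2 * p - 2)))| ^ p = 1) ∧
      (fun τ : ℝ => f τ -
          ((p - 1) / 2 * (x₀ ^ (p - 2) * y₀ ^ (p - 2)
            / (x₀ ^ (2 * p - 2) + y₀ ^ (2 * p - 2)) ^ ((3 : ℝ) / 2))) * τ ^ 2)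
        =o[nhds 0] (fun τ : ℝ => τ ^ 2) := by
  set S := x₀ ^ (2 * p - 2) + y₀ ^ (2 * p - 2)
  have hS : 0 < S := by positivity
  have hp0 : p ≠ 0 := by linarith
  have hy_pow := one_sub_rpow_rpow_inv_sub hp0 hy.le hs
  have hnear := eventually_pos_and_one_sub_rpow_pos (p := p) hx
    (by linarith [y₀.rpow_pos_of_pos hy p])
  obtain ⟨f, X, hf0, hX, hframe, hf⟩ := exists_graph_normal_expansion
    (φ := fun x => (1 - x ^ p) ^ p⁻¹) (a := x₀ ^ (p - 1)) (b := y₀ ^ (p - 1)) (N := √S)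
    (hnear.mono fun x hx => hasDerivAt_one_sub_rpow_rpow_inv hx.1.ne' hx.2.ne')
    (hasDerivAt_neg_rpow_sub_one_mul_one_sub_rpow hx hnear.self_of_nhds.2)
    (by rw [hy_pow 1, one_mul, neg_mul, mul_assoc, ← Real.rpow_add hy]; simp)
    (by positivity)
    (by rw [Real.sq_sqrt hS.le, rpow_sub_one_sq hx.le, rpow_sub_one_sq hy.le])
  have hφ₀ : (1 - x₀ ^ p) ^ p⁻¹ = y₀ := by
    simpa using hy_pow 0
  refine ⟨f, hf0, ?_, ?_⟩
  · filter_upwards [hframe, hX.eventually hnear] with τ ⟨hxτ, hyτ⟩ ⟨hpos, hu⟩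
    rw [hφ₀] at hyτ
    rw [hxτ, hyτ]
    exact abs_rpow_add_abs_one_sub_rpow_rpow_inv hp0 hpos.le hu.le
  · have hy3 : (y₀ ^ (p - 1)) ^ 3 * y₀ ^ (1 - 2 * p) = y₀ ^ (p - 2) := by
      rw [← Real.rpow_mul_natCast hy.le, ← Real.rpow_add hy]; ring_nf
    have hN3 : √S ^ 3 = S ^ ((3 : ℝ) / 2) := by
      rw [Real.sqrt_eq_rpow, ← Real.rpow_mul_natCast hS.le]; norm_num
    convert hf using 4
    rw [hy_pow 2, hN3, ← hy3]
    ring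
end
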